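/- Let S, N_B, N_C be positive integers, let R ∈ ℝ^{(S·N_B)×(S·N_C)} be block-circulant of order S with N_B×N_C blocks, and let μ > 0. Then the matrix RᵀR + μ·I_{S·N_C} is invertible and the controller gain matrix K = (RᵀR + μ·I_{S·N_C})⁻¹·Rᵀ ∈ ℝ^{(S·N_C)×(S·N_B)} is block-circulant of order S with N_C×N_B blocks. -/

import Mathlib

/-!
A matrix is block-circulant exactly when it is invariant under simultaneously shifting the block
row and block column indices by one, i.e. under the reindexing `B ↦ B.submatrix σ σ` by the
permutation `σ = blockShift`. Reindexing by permutations commutes with transposes, sums, scalar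
multiples, products and inverses, so `(RᵀR + μ I)⁻¹ Rᵀ` inherits block-circulance from `R`;
invertibility holds because `RᵀR + μ I` is positive definite.
-/

open Matrix Kronecker

/-- The cyclic shift permutation matrix `Ω_n` with `(Ω_n)_{i,j} = 1` iff `j ≡ i+1 (mod n)`. -/
def cyclicShift (n : ℕ) : Matrix (Fin n) (Fin n) ℝ :=
  Matrix.of fun i j => if (j : ℕ) = ((i : ℕ) + 1) % n then 1 else 0

/-- A block matrix is block-circulant of order `n` with `p × m` blocks if
`B = Σ_{k=0}^{n−1} Ω_n^k ⊗ b_k` for some blocks `b_k`. -/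
def IsBlockCirculant {n p m : ℕ} (B : Matrix (Fin n × Fin p) (Fin n × Fin m) ℝ) : Prop :=
  ∃ b : Fin n → Matrix (Fin p) (Fin m) ℝ,
    B = ∑ k : Fin n, (cyclicShift n ^ (k : ℕ)) ⊗ₖ b k

open scoped Fin.NatCast

section CyclicShift

variable {n : ℕ} [NeZero n]

lemma cyclicShift_apply (i j : Fin n) :
    cyclicShift n i j = if j = i + 1 then 1 else 0 := by
  have h : ((j : ℕ) = ((i : ℕ) + 1) % n) ↔ j = i + 1 := by
    rw [Fin.ext_iff, Fin.val_add, Fin.val_one', Nat.add_mod_mod]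
  simp only [cyclicShift, of_apply, h]

lemma cyclicShift_pow_apply (k : ℕ) (i j : Fin n) :
    (cyclicShift n ^ k) i j = if j = i + k then 1 else 0 := by
  induction k generalizing j with
  | zero => simp [one_apply, eq_comm]
  | succ k ih =>
    simp only [pow_succ, mul_apply, ih, cyclicShift_apply, ite_mul, one_mul, zero_mul,
      Finset.sum_ite_eq', Finset.mem_univ, if_true]
    push_cast
    rw [add_assoc]

lemma sum_cyclicShift_pow_kronecker_apply {p m : ℕ} (b : Fin n → Matrix (Fin p) (Fin m) ℝ)
    (i : Fin n) (a : Fin p) (j : Fin n) (c : Fin m) :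
    (∑ k : Fin n, (cyclicShift n ^ (k : ℕ)) ⊗ₖ b k) (i, a) (j, c) = b (j - i) a c := by
  have h : ∀ k : Fin n, (j = i + k) ↔ (k = j - i) := fun k => by
    rw [eq_sub_iff_add_eq, add_comm, eq_comm]
  simp only [Matrix.sum_apply, kroneckerMap_apply, cyclicShift_pow_apply, Fin.cast_val_eq_self,
    h, ite_mul, one_mul, zero_mul, Finset.sum_ite_eq', Finset.mem_univ, if_true]

end CyclicShift

def blockShift (n : ℕ) [NeZero n] (α : Type*) : Fin n × α ≃ Fin n × α :=
  (Equiv.addRight 1).prodCongr (Equiv.refl α)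

section BlockCirculant

variable {n p m : ℕ} [NeZero n]

theorem isBlockCirculant_iff_submatrix_blockShift
    {B : Matrix (Fin n × Fin p) (Fin n × Fin m) ℝ} :
    IsBlockCirculant B ↔ B.submatrix (blockShift n (Fin p)) (blockShift n (Fin m)) = B := by
  constructor
  · rintro ⟨b, rfl⟩
    ext ⟨i, a⟩ ⟨j, c⟩
    simp [blockShift, sum_cyclicShift_pow_kronecker_apply]
  · intro hB
    have shift_one (i a j c) : B (i + 1, a) (j + 1, c) = B (i, a) (j, c) :=
      congrFun (congrFun hB (i, a)) (j, c)
    have shift (t : ℕ) (i a j c) : B (i + t, a) (j + t, c) = B (i, a) (j, c) := by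
      induction t with
      | zero => simp
      | succ t ih => rw [Nat.cast_succ, ← add_assoc, ← add_assoc, shift_one, ih]
    refine ⟨fun k => of fun a c => B (0, a) (k, c), ?_⟩
    ext ⟨i, a⟩ ⟨j, c⟩
    simpa [sum_cyclicShift_pow_kronecker_apply] using shift i 0 a (j - i) c

namespace IsBlockCirculant

variable {q : ℕ} {A : Matrix (Fin n × Fin p) (Fin n × Fin m) ℝ}
  {B : Matrix (Fin n × Fin m) (Fin n × Fin q) ℝ}

theorem transpose (hA : IsBlockCirculant A) : IsBlockCirculant Aᵀ := by
  rw [isBlockCirculant_iff_submatrix_blockShift] at hA ⊢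
  rw [← transpose_submatrix, hA]

theorem mul (hA : IsBlockCirculant A) (hB : IsBlockCirculant B) : IsBlockCirculant (A * B) := by
  rw [isBlockCirculant_iff_submatrix_blockShift] at hA hB ⊢
  rw [← submatrix_mul_equiv _ _ _ (blockShift n (Fin m)), hA, hB]

theorem add {A' : Matrix (Fin n × Fin p) (Fin n × Fin m) ℝ} (hA : IsBlockCirculant A)
    (hA' : IsBlockCirculant A') : IsBlockCirculant (A + A') := by
  rw [isBlockCirculant_iff_submatrix_blockShift] at hA hA' ⊢
  rw [submatrix_add, Pi.add_apply, Pi.add_apply, hA, hA']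

theorem smul (hA : IsBlockCirculant A) (r : ℝ) : IsBlockCirculant (r • A) := by
  rw [isBlockCirculant_iff_submatrix_blockShift] at hA ⊢
  rw [submatrix_smul, Pi.smul_apply, Pi.smul_apply, hA]

theorem one : IsBlockCirculant (1 : Matrix (Fin n × Fin p) (Fin n × Fin p) ℝ) := by
  rw [isBlockCirculant_iff_submatrix_blockShift, submatrix_one_equiv]

theorem inv {A : Matrix (Fin n × Fin p) (Fin n × Fin p) ℝ} (hA : IsBlockCirculant A) :
    IsBlockCirculant A⁻¹ := by
  rw [isBlockCirculant_iff_submatrix_blockShift] at hA ⊢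
  rw [← inv_submatrix_equiv, hA]

end IsBlockCirculant

end BlockCirculant

theorem isUnit_transpose_mul_self_add_smul_one {ι κ : Type*} [Fintype ι] [Fintype κ]
    [DecidableEq κ] (A : Matrix ι κ ℝ) {μ : ℝ} (hμ : 0 < μ) :
    IsUnit (Aᵀ * A + μ • (1 : Matrix κ κ ℝ)) :=
  conjTranspose_eq_transpose_of_trivial A ▸
    (PosDef.posSemidef_add (posSemidef_conjTranspose_mul_self A) (PosDef.one.smul hμ)).isUnit

theorem gain_matrix_blockCirculant_general
    (S N_B N_C : ℕ) (hS : 0 < S)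
    (R : Matrix (Fin S × Fin N_B) (Fin S × Fin N_C) ℝ)
    (hR : IsBlockCirculant R)
    (μ : ℝ) (hμ : 0 < μ) :
    IsUnit (Rᵀ * R + μ • (1 : Matrix (Fin S × Fin N_C) (Fin S × Fin N_C) ℝ)) ∧
    IsBlockCirculant
      ((Rᵀ * R + μ • (1 : Matrix (Fin S × Fin N_C) (Fin S × Fin N_C) ℝ))⁻¹ * Rᵀ) := by
  have : NeZero S := ⟨hS.ne'⟩
  exact ⟨isUnit_transpose_mul_self_add_smul_one R hμ,
    ((hR.transpose.mul hR).add (IsBlockCirculant.one.smul μ)).inv.mul hR.transpose⟩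

/-- **The controller gain matrix of a block-circulant orbit response matrix is
block-circulant.** If `R ∈ BC(S, N_B, N_C)` and `μ > 0`, then `RᵀR + μ·I` is invertible and
`K = (RᵀR + μ·I)⁻¹·Rᵀ ∈ BC(S, N_C, N_B)`. -/
theorem gain_matrix_blockCirculant
    (S N_B N_C : ℕ) (hS : 0 < S) (hNB : 0 < N_B) (hNC : 0 < N_C)
    (R : Matrix (Fin S × Fin N_B) (Fin S × Fin N_C) ℝ)
    (hR : IsBlockCirculant R)
    (μ : ℝ) (hμ : 0 < μ) :
    IsUnit (Rᵀ * R + μ • (1 : Matrix (Fin S × Fin N_C) (Fin S × Fin N_C) ℝ)) ∧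
    IsBlockCirculant
      ((Rᵀ * R + μ • (1 : Matrix (Fin S × Fin N_C) (Fin S × Fin N_C) ℝ))⁻¹ * Rᵀ) :=
  gain_matrix_blockCirculant_general S N_B N_C hS R hR μ hμ
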